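/- arXiv:2003.09023 — 2 statements merged into one kernel-verified Lean document; each statement's English description precedes it below -/
import Mathlib

section
/- For a < 0, the function ψ(t) = t(1+t²)^{-a/2} / ∫₀ᵗ (1+s²)^{-a/2} ds is monotone nondecreasing on (0,∞); for a ∈ (0,1) it is monotone nonincreasing on (0,∞). -/
/-!
Write `ψ = f / g` with `f t = t (1 + t²)^(-a/2)` and `g t = ∫₀ᵗ (1 + s²)^(-a/2) ds`. Both vanish
at `0`, and `f' / g' = 1 - a t² / (1 + t²)` is nondecreasing for `a < 0` and nonincreasing for
`a > 0`. The monotone form of l'Hôpital's rule transfers this monotonicity to `f / g`.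
-/

open Real Set

/-- The monotone form of l'Hôpital's rule. -/
theorem monotoneOn_div_of_monotoneOn_deriv_div {f g f' g' : ℝ → ℝ} {a : ℝ}
    (hfc : ContinuousOn f (Ici a)) (hgc : ContinuousOn g (Ici a))
    (hf : ∀ x ∈ Ioi a, HasDerivAt f (f' x) x) (hg : ∀ x ∈ Ioi a, HasDerivAt g (g' x) x)
    (hfa : f a = 0) (hga : g a = 0) (hg' : ∀ x ∈ Ioi a, 0 < g' x)
    (hmono : MonotoneOn (fun x => f' x / g' x) (Ioi a)) :
    MonotoneOn (fun x => f x / g x) (Ioi a) := by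
  have hg_pos : ∀ x ∈ Ioi a, 0 < g x := by
    intro x hx
    obtain ⟨ξ, hξ, hslope⟩ := exists_hasDerivAt_eq_slope g g' hx (hgc.mono Icc_subset_Ici_self)
      fun y hy => hg y (Ioo_subset_Ioi_self hy)
    rw [hga, sub_zero, eq_div_iff (sub_pos.2 hx).ne'] at hslope
    rw [← hslope]
    exact mul_pos (hg' ξ (Ioo_subset_Ioi_self hξ)) (sub_pos.2 hx)
  -- Cauchy's mean value theorem: `f x / g x = f' ξ / g' ξ ≤ f' x / g' x` for some `ξ ∈ (a, x)`.
  have hdiv_le : ∀ x ∈ Ioi a, f x / g x ≤ f' x / g' x := by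
    intro x hx
    obtain ⟨ξ, hξ, hcauchy⟩ := exists_ratio_hasDerivAt_eq_ratio_slope f f' hx
      (hfc.mono Icc_subset_Ici_self) (fun y hy => hf y (Ioo_subset_Ioi_self hy))
      g g' (hgc.mono Icc_subset_Ici_self) (fun y hy => hg y (Ioo_subset_Ioi_self hy))
    have hξ' : ξ ∈ Ioi a := Ioo_subset_Ioi_self hξ
    rw [hfa, hga, sub_zero, sub_zero] at hcauchy
    calc f x / g x = f' ξ / g' ξ :=
          (div_eq_div_iff (hg_pos x hx).ne' (hg' ξ hξ').ne').2 (by linarith)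
      _ ≤ f' x / g' x := hmono hξ' hx hξ.2.le
  have hderiv : ∀ x ∈ Ioi a,
      HasDerivAt (fun x => f x / g x) ((f' x * g x - f x * g' x) / g x ^ 2) x :=
    fun x hx => (hf x hx).div (hg x hx) (hg_pos x hx).ne'
  refine monotoneOn_of_deriv_nonneg (convex_Ioi a)
    (fun x hx => (hderiv x hx).continuousAt.continuousWithinAt)
    (fun x hx => (hderiv x (interior_subset hx)).differentiableAt.differentiableWithinAt)
    fun x hx => ?_
  rw [interior_Ioi] at hx
  rw [(hderiv x hx).deriv]
  have hcross : f x * g' x ≤ f' x * g x :=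
    (div_le_div_iff₀ (hg_pos x hx) (hg' x hx)).1 (hdiv_le x hx)
  exact div_nonneg (sub_nonneg.2 hcross) (sq_nonneg _)

theorem antitoneOn_div_of_antitoneOn_deriv_div {f g f' g' : ℝ → ℝ} {a : ℝ}
    (hfc : ContinuousOn f (Ici a)) (hgc : ContinuousOn g (Ici a))
    (hf : ∀ x ∈ Ioi a, HasDerivAt f (f' x) x) (hg : ∀ x ∈ Ioi a, HasDerivAt g (g' x) x)
    (hfa : f a = 0) (hga : g a = 0) (hg' : ∀ x ∈ Ioi a, 0 < g' x)
    (hanti : AntitoneOn (fun x => f' x / g' x) (Ioi a)) :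
    AntitoneOn (fun x => f x / g x) (Ioi a) := by
  have hneg := monotoneOn_div_of_monotoneOn_deriv_div (f := -f) (f' := -f') hfc.neg hgc
    (fun x hx => (hf x hx).neg) hg (by simp [hfa]) hga hg' (by simpa [neg_div] using hanti.neg)
  simpa [neg_div] using hneg.neg

theorem monotoneOn_sq_div_one_add_sq : MonotoneOn (fun t : ℝ => t ^ 2 / (1 + t ^ 2)) (Ici 0) := by
  intro s hs t ht hst
  rw [div_le_div_iff₀ (by positivity) (by positivity)]
  nlinarith [mul_le_mul hst hst hs ht]

theorem hasDerivAt_mul_one_add_sq_rpow (a t : ℝ) :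
    HasDerivAt (fun t : ℝ => t * (1 + t ^ 2) ^ (-a / 2))
      ((1 + t ^ 2) ^ (-a / 2) * (1 - a * (t ^ 2 / (1 + t ^ 2)))) t := by
  have hpos : (0 : ℝ) < 1 + t ^ 2 := by positivity
  have h := (hasDerivAt_id' t).mul
    (((hasDerivAt_pow 2 t).const_add 1).rpow_const (p := -a / 2) (Or.inl hpos.ne'))
  refine h.congr_deriv ?_
  rw [rpow_sub_one hpos.ne']
  field_simp
  ring

theorem hasDerivAt_integral_one_add_sq_rpow (a t : ℝ) :
    HasDerivAt (fun t : ℝ => ∫ s in (0 : ℝ)..t, (1 + s ^ 2) ^ (-a / 2)) ((1 + t ^ 2) ^ (-a / 2)) t :=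
  have hcont : Continuous fun s : ℝ => (1 + s ^ 2) ^ (-a / 2) :=
    (continuous_const.add (continuous_pow 2)).rpow_const fun s =>
      Or.inl (by positivity : (1 : ℝ) + s ^ 2 ≠ 0)
  (hcont.integral_hasStrictDerivAt 0 t).hasDerivAt

theorem stmt_2_general (a : ℝ) :
    (a < 0 → MonotoneOn (fun t : ℝ => t * (1 + t ^ 2) ^ (-a / 2) / ∫ s in (0:ℝ)..t, (1 + s ^ 2) ^ (-a / 2)) (Set.Ioi 0)) ∧
    (0 < a → AntitoneOn (fun t : ℝ => t * (1 + t ^ 2) ^ (-a / 2) / ∫ s in (0:ℝ)..t, (1 + s ^ 2) ^ (-a / 2)) (Set.Ioi 0)) := by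
  have hf := hasDerivAt_mul_one_add_sq_rpow a
  have hg := hasDerivAt_integral_one_add_sq_rpow a
  have hfc := HasDerivAt.continuousOn (s := Ici 0) fun t _ => hf t
  have hgc := HasDerivAt.continuousOn (s := Ici 0) fun t _ => hg t
  have hg' : ∀ t ∈ Ioi (0 : ℝ), 0 < (1 + t ^ 2) ^ (-a / 2) := fun t _ => by positivity
  have hratio : EqOn (fun t : ℝ => 1 - a * (t ^ 2 / (1 + t ^ 2)))
      (fun t => (1 + t ^ 2) ^ (-a / 2) * (1 - a * (t ^ 2 / (1 + t ^ 2))) / (1 + t ^ 2) ^ (-a / 2))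
      (Ioi 0) := fun t ht => (mul_div_cancel_left₀ _ (hg' t ht).ne').symm
  have hsq := monotoneOn_sq_div_one_add_sq.mono Ioi_subset_Ici_self
  refine ⟨fun ha0 => ?_, fun ha0 => ?_⟩
  · refine monotoneOn_div_of_monotoneOn_deriv_div hfc hgc (fun t _ => hf t) (fun t _ => hg t)
      (by simp) (by simp) hg' (MonotoneOn.congr (fun s hs t ht hst => ?_) hratio)
    nlinarith [hsq hs ht hst]
  · refine antitoneOn_div_of_antitoneOn_deriv_div hfc hgc (fun t _ => hf t) (fun t _ => hg t)
      (by simp) (by simp) hg' (AntitoneOn.congr (fun s hs t ht hst => ?_) hratio)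
    nlinarith [hsq hs ht hst]

theorem stmt_2 (a : ℝ) (ha : a < 1) :
    (a < 0 → MonotoneOn (fun t : ℝ => t * (1 + t ^ 2) ^ (-a / 2) / ∫ s in (0:ℝ)..t, (1 + s ^ 2) ^ (-a / 2)) (Set.Ioi 0)) ∧
    (0 < a → AntitoneOn (fun t : ℝ => t * (1 + t ^ 2) ^ (-a / 2) / ∫ s in (0:ℝ)..t, (1 + s ^ 2) ^ (-a / 2)) (Set.Ioi 0)) :=
  stmt_2_general a
end

section
/- For a < 0 and t > 0, one has the pointwise bound (1 + t²/(-a))^{-a/2+1} / (t ∫₀ᵗ (1 + s²/(-a))^{-a/2} ds) ≥ e^{t²/2} / (t ∫₀ᵗ e^{s²/2} ds), i.e. w_a(t) ≥ v(t) where w_a is the parameterized version of the ratio appearing in the super-singular spectral analysis. -/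
/-!
Put `b = -a`, `E t = ∫₀ᵗ exp (s²/2)`, `w = exp (-t²/2) E` and `g = (1 + t²/b)^(b/2)`, so
that `w' = 1 - t w` and `g' = t g / (1 + t²/b)`. The claim amounts to
`∫₀ᵗ g ≤ (1 + t²/b) g w`; the difference of the two sides vanishes at `0` and has derivative
`(t g / b) (t - (t² - 2) w)`, so it suffices that `(t² - 2) E ≤ t exp (t²/2)`. This follows by
comparing `E` with `ρ exp (t²/2)` for supersolutions `ρ' + t ρ ≥ 1` of the same ODE:
`ρ = 24 t / (t² + 4)²` on `[0, 3]` and `ρ = t / (t² - 2)` on `[3, ∞)`. Both satisfy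
`(t² - 2) ρ ≤ t`, the first because `(t² + 4)² - 24 (t² - 2) = (t² - 8)²`.
-/

open Real Set

noncomputable def integralExpSqHalf (t : ℝ) : ℝ := ∫ s in (0:ℝ)..t, exp (s ^ 2 / 2)

lemma continuous_exp_sq_half : Continuous fun s : ℝ => exp (s ^ 2 / 2) := by fun_prop

lemma hasDerivAt_integralExpSqHalf (t : ℝ) :
    HasDerivAt integralExpSqHalf (exp (t ^ 2 / 2)) t :=
  (continuous_exp_sq_half.integral_hasStrictDerivAt 0 t).hasDerivAt

lemma integralExpSqHalf_pos {t : ℝ} (ht : 0 < t) : 0 < integralExpSqHalf t :=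
  intervalIntegral.intervalIntegral_pos_of_pos_on (continuous_exp_sq_half.intervalIntegrable _ _)
    (fun _ _ => exp_pos _) ht

lemma hasDerivAt_exp_sq_half (t : ℝ) :
    HasDerivAt (fun s : ℝ => exp (s ^ 2 / 2)) (t * exp (t ^ 2 / 2)) t := by
  refine ((hasDerivAt_pow 2 t).div_const 2).exp.congr_deriv ?_
  ring

lemma integralExpSqHalf_le_of_supersolution {ρ ρ' : ℝ → ℝ} {t₀ t₁ : ℝ} (h₀₁ : t₀ ≤ t₁)
    (hρ : ∀ t ∈ Icc t₀ t₁, HasDerivAt ρ (ρ' t) t)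
    (hsuper : ∀ t ∈ Ioo t₀ t₁, 1 ≤ ρ' t + t * ρ t)
    (hinit : integralExpSqHalf t₀ ≤ ρ t₀ * exp (t₀ ^ 2 / 2)) :
    integralExpSqHalf t₁ ≤ ρ t₁ * exp (t₁ ^ 2 / 2) := by
  set φ : ℝ → ℝ := fun t => ρ t * exp (t ^ 2 / 2) - integralExpSqHalf t
  have hφ : ∀ t ∈ Icc t₀ t₁,
      HasDerivAt φ (exp (t ^ 2 / 2) * (ρ' t + t * ρ t - 1)) t := fun t ht => by
    refine (((hρ t ht).mul (hasDerivAt_exp_sq_half t)).sub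
      (hasDerivAt_integralExpSqHalf t)).congr_deriv ?_
    ring
  have hmono : MonotoneOn φ (Icc t₀ t₁) := by
    refine monotoneOn_of_hasDerivWithinAt_nonneg (convex_Icc t₀ t₁)
      (f' := fun t => exp (t ^ 2 / 2) * (ρ' t + t * ρ t - 1))
      (fun t ht => (hφ t ht).continuousAt.continuousWithinAt) (fun t ht => ?_) (fun t ht => ?_)
    · rw [interior_Icc] at ht
      exact (hφ t (Ioo_subset_Icc_self ht)).hasDerivWithinAt
    · rw [interior_Icc] at ht
      have := hsuper t ht
      have := exp_pos (t ^ 2 / 2)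
      positivity
  have := hmono (left_mem_Icc.2 h₀₁) (right_mem_Icc.2 h₀₁) h₀₁
  simp only [φ] at this
  linarith

lemma integralExpSqHalf_le_of_le_three {t : ℝ} (ht₀ : 0 ≤ t) (ht₃ : t ≤ 3) :
    integralExpSqHalf t ≤ 24 * t / (t ^ 2 + 4) ^ 2 * exp (t ^ 2 / 2) := by
  refine integralExpSqHalf_le_of_supersolution (ρ := fun t => 24 * t / (t ^ 2 + 4) ^ 2)
    (ρ' := fun t => 24 * (4 - 3 * t ^ 2) / (t ^ 2 + 4) ^ 3) ht₀ (fun t _ => ?_) (fun t ht => ?_)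
    (by simp [integralExpSqHalf])
  · have hne : (t ^ 2 + 4) ^ 2 ≠ 0 := by positivity
    refine (((hasDerivAt_id t).const_mul 24).div
      (((hasDerivAt_pow 2 t).add_const 4).pow 2) hne).congr_deriv ?_
    simp only [id, Pi.pow_apply]
    field_simp
    ring
  · obtain ⟨ht0, ht3⟩ := ht
    have hx : t ^ 2 ≤ 9 := by nlinarith
    rw [← sub_nonneg]
    have hcubic : 0 ≤ -(t ^ 2) ^ 3 + 12 * (t ^ 2) ^ 2 - 24 * t ^ 2 + 32 := by
      nlinarith [sq_nonneg (t ^ 2 - 3), mul_nonneg (sq_nonneg t) (sub_nonneg.2 hx), sq_nonneg t]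
    have : 24 * (4 - 3 * t ^ 2) / (t ^ 2 + 4) ^ 3 + t * (24 * t / (t ^ 2 + 4) ^ 2) - 1
        = (-(t ^ 2) ^ 3 + 12 * (t ^ 2) ^ 2 - 24 * t ^ 2 + 32) / (t ^ 2 + 4) ^ 3 := by
      field_simp
      ring
    rw [this]
    positivity

lemma integralExpSqHalf_le_of_three_le {t : ℝ} (ht : 3 ≤ t) :
    integralExpSqHalf t ≤ t / (t ^ 2 - 2) * exp (t ^ 2 / 2) := by
  refine integralExpSqHalf_le_of_supersolution (ρ := fun t => t / (t ^ 2 - 2))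
    (ρ' := fun t => -(t ^ 2 + 2) / (t ^ 2 - 2) ^ 2) ht (fun s hs => ?_) (fun s hs => ?_) ?_
  · have hne : s ^ 2 - 2 ≠ 0 := by nlinarith [hs.1]
    refine ((hasDerivAt_id s).div ((hasDerivAt_pow 2 s).sub_const 2) hne).congr_deriv ?_
    simp only [id]
    field_simp
    ring
  · have hs6 : 6 ≤ s ^ 2 := by nlinarith [hs.1]
    have : -(s ^ 2 + 2) / (s ^ 2 - 2) ^ 2 + s * (s / (s ^ 2 - 2)) - 1
        = (s ^ 2 - 6) / (s ^ 2 - 2) ^ 2 := by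
      have : s ^ 2 - 2 ≠ 0 := by linarith
      field_simp
      ring
    rw [← sub_nonneg, this]
    exact div_nonneg (by linarith) (sq_nonneg _)
  · refine (integralExpSqHalf_le_of_le_three (by norm_num) le_rfl).trans ?_
    exact mul_le_mul_of_nonneg_right (by norm_num) (exp_pos _).le

lemma sq_sub_two_mul_integralExpSqHalf_le {t : ℝ} (ht : 0 ≤ t) :
    (t ^ 2 - 2) * integralExpSqHalf t ≤ t * exp (t ^ 2 / 2) := by
  have hexp := exp_pos (t ^ 2 / 2)
  rcases le_or_gt (t ^ 2) 2 with ht2 | ht2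
  · have : 0 ≤ integralExpSqHalf t :=
      intervalIntegral.integral_nonneg ht fun _ _ => (exp_pos _).le
    nlinarith
  rcases le_total t 3 with ht3 | ht3
  · calc (t ^ 2 - 2) * integralExpSqHalf t
          ≤ (t ^ 2 - 2) * (24 * t / (t ^ 2 + 4) ^ 2 * exp (t ^ 2 / 2)) := by
            gcongr; exact integralExpSqHalf_le_of_le_three ht ht3
      _ = t * (24 * (t ^ 2 - 2) / (t ^ 2 + 4) ^ 2) * exp (t ^ 2 / 2) := by ring
      _ ≤ t * 1 * exp (t ^ 2 / 2) := by
        gcongr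
        rw [div_le_one (by positivity)]
        nlinarith [sq_nonneg (t ^ 2 - 8)]
      _ = t * exp (t ^ 2 / 2) := by ring
  · calc (t ^ 2 - 2) * integralExpSqHalf t
          ≤ (t ^ 2 - 2) * (t / (t ^ 2 - 2) * exp (t ^ 2 / 2)) := by
            gcongr; exact integralExpSqHalf_le_of_three_le ht3
      _ = t * exp (t ^ 2 / 2) := by field_simp

/-- `√2 F(t / √2)` for Dawson's function `F`. -/
noncomputable def scaledDawson (t : ℝ) : ℝ := exp (-(t ^ 2 / 2)) * integralExpSqHalf t

lemma hasDerivAt_scaledDawson (t : ℝ) :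
    HasDerivAt scaledDawson (1 - t * scaledDawson t) t := by
  have hneg : HasDerivAt (fun s : ℝ => exp (-(s ^ 2 / 2))) (-t * exp (-(t ^ 2 / 2))) t := by
    refine (((hasDerivAt_pow 2 t).div_const 2).fun_neg.exp).congr_deriv ?_
    ring
  refine (hneg.mul (hasDerivAt_integralExpSqHalf t)).congr_deriv ?_
  rw [scaledDawson, ← exp_add]
  simp only [neg_add_cancel, exp_zero]
  ring

lemma sq_sub_two_mul_scaledDawson_le {t : ℝ} (ht : 0 ≤ t) : (t ^ 2 - 2) * scaledDawson t ≤ t :=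
  calc (t ^ 2 - 2) * scaledDawson t
      = exp (-(t ^ 2 / 2)) * ((t ^ 2 - 2) * integralExpSqHalf t) := by
        rw [scaledDawson]; ring
    _ ≤ exp (-(t ^ 2 / 2)) * (t * exp (t ^ 2 / 2)) :=
        mul_le_mul_of_nonneg_left (sq_sub_two_mul_integralExpSqHalf_le ht) (exp_pos _).le
    _ = t := by rw [mul_left_comm, ← exp_add, neg_add_cancel, exp_zero, mul_one]

noncomputable def powWeight (b s : ℝ) : ℝ := (1 + s ^ 2 / b) ^ (b / 2)

noncomputable def integralPowWeight (b t : ℝ) : ℝ := ∫ s in (0:ℝ)..t, powWeight b s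

noncomputable def weightDefect (b t : ℝ) : ℝ :=
  (1 + t ^ 2 / b) * powWeight b t * scaledDawson t - integralPowWeight b t

section

variable {b : ℝ} (hb : 0 < b)
include hb

lemma continuous_powWeight : Continuous (powWeight b) :=
  (by fun_prop : Continuous fun s : ℝ => 1 + s ^ 2 / b).rpow_const fun _ => Or.inr (by positivity)

lemma powWeight_pos (s : ℝ) : 0 < powWeight b s := rpow_pos_of_pos (by positivity) _

lemma hasDerivAt_powWeight (t : ℝ) :
    HasDerivAt (powWeight b) (t * powWeight b t / (1 + t ^ 2 / b)) t := by
  have hp : 0 < 1 + t ^ 2 / b := by positivity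
  refine ((((hasDerivAt_pow 2 t).div_const b).const_add 1).rpow_const
    (p := b / 2) (Or.inl hp.ne')).congr_deriv ?_
  rw [powWeight, rpow_sub_one hp.ne']
  field_simp
  ring

lemma integralPowWeight_pos {t : ℝ} (ht : 0 < t) : 0 < integralPowWeight b t :=
  intervalIntegral.intervalIntegral_pos_of_pos_on
    ((continuous_powWeight hb).intervalIntegrable _ _) (fun s _ => powWeight_pos hb s) ht

lemma hasDerivAt_weightDefect (t : ℝ) :
    HasDerivAt (weightDefect b)
      (powWeight b t * t / b * (t - (t ^ 2 - 2) * scaledDawson t)) t := by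
  have hp : HasDerivAt (fun s : ℝ => 1 + s ^ 2 / b) (2 * t / b) t := by
    refine (((hasDerivAt_pow 2 t).div_const b).const_add 1).congr_deriv ?_
    ring
  have hF : HasDerivAt (integralPowWeight b) (powWeight b t) t :=
    ((continuous_powWeight hb).integral_hasStrictDerivAt 0 t).hasDerivAt
  refine (((hp.mul (hasDerivAt_powWeight hb t)).mul (hasDerivAt_scaledDawson t)).sub
    hF).congr_deriv ?_
  have : 1 + t ^ 2 / b ≠ 0 := by positivity
  simp only [Pi.mul_apply]
  field_simp
  ring

lemma weightDefect_nonneg {t : ℝ} (ht : 0 ≤ t) : 0 ≤ weightDefect b t := by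
  have hmono : MonotoneOn (weightDefect b) (Ici 0) := by
    refine monotoneOn_of_hasDerivWithinAt_nonneg (convex_Ici 0)
      (fun s _ => (hasDerivAt_weightDefect hb s).continuousAt.continuousWithinAt)
      (fun s _ => (hasDerivAt_weightDefect hb s).hasDerivWithinAt) fun s hs => ?_
    rw [interior_Ici] at hs
    have hs₀ : (0 : ℝ) < s := hs
    have := powWeight_pos hb s
    have : 0 ≤ s - (s ^ 2 - 2) * scaledDawson s :=
      sub_nonneg.2 (sq_sub_two_mul_scaledDawson_le hs₀.le)
    positivity
  have h0 : weightDefect b 0 = 0 := by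
    simp [weightDefect, integralPowWeight, scaledDawson, integralExpSqHalf]
  simpa [h0] using hmono self_mem_Ici ht ht

lemma exp_div_le_rpow_div {t : ℝ} (ht : 0 < t) :
    exp (t ^ 2 / 2) / (t * integralExpSqHalf t) ≤
      (1 + t ^ 2 / b) ^ (1 + b / 2) / (t * integralPowWeight b t) := by
  have hp : 0 < 1 + t ^ 2 / b := by positivity
  have hE := integralExpSqHalf_pos ht
  have hF := integralPowWeight_pos hb ht
  have hD := weightDefect_nonneg hb ht.le
  rw [weightDefect, sub_nonneg, scaledDawson] at hD
  have hexpF : exp (t ^ 2 / 2) * integralPowWeight b t ≤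
      (1 + t ^ 2 / b) * powWeight b t * integralExpSqHalf t :=
    calc exp (t ^ 2 / 2) * integralPowWeight b t
        ≤ exp (t ^ 2 / 2) * ((1 + t ^ 2 / b) * powWeight b t *
            (exp (-(t ^ 2 / 2)) * integralExpSqHalf t)) :=
          mul_le_mul_of_nonneg_left hD (exp_pos _).le
      _ = (1 + t ^ 2 / b) * powWeight b t * integralExpSqHalf t := by
          rw [mul_left_comm, mul_left_comm (exp _), ← mul_assoc (exp _), ← exp_add,
            neg_add_cancel, exp_zero, one_mul]
  rw [div_le_div_iff₀ (by positivity) (by positivity), rpow_add hp, rpow_one]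
  rw [powWeight] at hexpF
  linarith [mul_le_mul_of_nonneg_left hexpF ht.le]

end

theorem stmt_13 (a : ℝ) (ha : a < 0) :
    ∀ t : ℝ, 0 < t →
      Real.exp (t ^ 2 / 2) / (t * ∫ s in (0:ℝ)..t, Real.exp (s ^ 2 / 2)) ≤
        (1 + t ^ 2 / (-a)) ^ (1 - a / 2) /
          (t * ∫ s in (0:ℝ)..t, (1 + s ^ 2 / (-a)) ^ (-a / 2)) := by
  intro t ht
  rw [show 1 - a / 2 = 1 + -a / 2 by ring]
  exact exp_div_le_rpow_div (neg_pos.2 ha) ht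
end
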